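/- Let G be an edge-weighted graph whose distinct edge weights are w_1 < ... < w_m, let κ_j be the number of connected components of the subgraph with edges of weight < w_j (κ_{m+1} = #cc(G)), and let H := G_{<w_j} for some j. Then the minimum spanning forest cost of G_{<w_{j+1}} equals the minimum spanning forest cost of H plus (κ_j − κ_{j+1})·w_j. -/

import Mathlib

/-- The threshold subgraph `G_{<t}` of an edge-weighted graph, keeping exactly the
edges of weight strictly less than `t`. -/
def threshold {V : Type*} (G : SimpleGraph V) (w : Sym2 V → ℝ) (t : ℝ) : SimpleGraph V where
  Adj u v := G.Adj u v ∧ w s(u, v) < t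
  symm := by
    constructor
    intro u v h
    refine ⟨h.1.symm, ?_⟩
    rw [Sym2.eq_swap]
    exact h.2
  loopless := by
    constructor
    intro u h
    exact G.loopless.irrefl u h.1

/-- The minimum spanning forest cost of a graph `X` (with ambient weights `w`):
the infimum of total weights of acyclic subgraphs of `X` having the same connected
components (i.e. the same reachability relation) as `X`. -/
noncomputable def msf {V : Type*} (X : SimpleGraph V) (w : Sym2 V → ℝ) : ℝ :=
  sInf {c : ℝ | ∃ F : SimpleGraph V, F ≤ X ∧ F.IsAcyclic ∧
    (∀ u v : V, F.Reachable u v ↔ X.Reachable u v) ∧ c = ∑ᶠ e ∈ F.edgeSet, w e}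


section Helpers
open SimpleGraph

variable {V : Type*}

lemma acyclic_mono {F F' : SimpleGraph V} (h : F ≤ F') (hF' : F'.IsAcyclic) : F.IsAcyclic :=
  fun _v c hc => hF' (c.mapLe h) (hc.mapLe h)

lemma reachable_sup_edge {F : SimpleGraph V} {u v : V} (x y : V)
    (h : (F ⊔ edge u v).Reachable x y) :
    F.Reachable x y ∨ (F.Reachable x u ∧ F.Reachable v y) ∨
      (F.Reachable x v ∧ F.Reachable u y) := by
  obtain ⟨p⟩ := h
  induction p with
  | nil => exact Or.inl (Reachable.refl _)
  | cons h p ih =>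
    rename_i a b c
    rcases h with h | h
    · rcases ih with h' | ⟨h1, h2⟩ | ⟨h1, h2⟩
      · exact Or.inl (h.reachable.trans h')
      · exact Or.inr (Or.inl ⟨h.reachable.trans h1, h2⟩)
      · exact Or.inr (Or.inr ⟨h.reachable.trans h1, h2⟩)
    · rw [edge_adj] at h
      obtain ⟨⟨rfl, rfl⟩ | ⟨rfl, rfl⟩, hne⟩ := h
      · rcases ih with h' | ⟨h1, h2⟩ | ⟨h1, h2⟩
        · exact Or.inr (Or.inl ⟨Reachable.refl _, h'⟩)
        · exact Or.inr (Or.inl ⟨h1.symm.trans h1, h2⟩)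
        · exact Or.inl h2
      · rcases ih with h' | ⟨h1, h2⟩ | ⟨h1, h2⟩
        · exact Or.inr (Or.inr ⟨Reachable.refl _, h'⟩)
        · exact Or.inl h2
        · exact Or.inr (Or.inr ⟨h1.symm.trans h1, h2⟩)

lemma sup_edge_sdiff {F : SimpleGraph V} {u v : V} (hne : u ≠ v) (hadj : ¬ F.Adj u v) :
    (F ⊔ edge u v) \ fromEdgeSet {s(u, v)} = F := by
  ext a b
  simp only [sdiff_adj, sup_adj, edge_adj, fromEdgeSet_adj, Set.mem_singleton_iff]
  constructor
  · rintro ⟨h1 | ⟨⟨rfl, rfl⟩ | ⟨rfl, rfl⟩, h⟩, h2⟩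
    · exact h1
    · exact absurd ⟨rfl, h⟩ h2
    · exact absurd ⟨(Sym2.eq_swap ▸ rfl), h⟩ h2
  · intro h
    refine ⟨Or.inl h, ?_⟩
    rintro ⟨he, hne'⟩
    rw [Sym2.eq_iff] at he
    rcases he with ⟨rfl, rfl⟩ | ⟨rfl, rfl⟩
    · exact hadj h
    · exact hadj h.symm

lemma isAcyclic_sup_edge {F : SimpleGraph V} {u v : V} (hne : u ≠ v)
    (hr : ¬ F.Reachable u v) (hF : F.IsAcyclic) : (F ⊔ edge u v).IsAcyclic := by
  have hadj : ¬ F.Adj u v := fun h => hr h.reachable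
  have hbridge : (F ⊔ edge u v).IsBridge s(u, v) := by
    rw [isBridge_iff]
    rw [deleteEdges, sup_edge_sdiff hne hadj]; exact hr
  intro x c hc
  have hmem := hbridge.notMem_edges_of_isCycle hc
  have hsub : ∀ e ∈ c.edges, e ∈ F.edgeSet := by
    intro e he
    have := c.edges_subset_edgeSet he
    rw [edgeSet_sup, edge_edgeSet_of_ne hne] at this
    rcases this with h | h
    · exact h
    · exact absurd (h ▸ he) hmem
  exact hF (c.transfer F hsub) (hc.transfer hsub)

lemma reachable_sup_edge_iff {F : SimpleGraph V} {u v : V} (hne : u ≠ v) (x : V) :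
    (F ⊔ edge u v).Reachable x u ↔ F.Reachable x u ∨ F.Reachable x v := by
  have hadj : (F ⊔ edge u v).Adj u v := by
    rw [sup_adj, edge_adj]; exact Or.inr ⟨Or.inl ⟨rfl, rfl⟩, hne⟩
  constructor
  · intro h
    rcases reachable_sup_edge x u h with h' | ⟨h1, _⟩ | ⟨h1, _⟩
    · exact Or.inl h'
    · exact Or.inl h1
    · exact Or.inr h1
  · rintro (h | h)
    · exact h.mono le_sup_left
    · exact (h.mono le_sup_left).trans hadj.symm.reachable

lemma card_cc_sup_edge [Fintype V] {F : SimpleGraph V} {u v : V} (hne : u ≠ v)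
    (hr : ¬ F.Reachable u v) :
    Nat.card (F ⊔ edge u v).ConnectedComponent + 1 = Nat.card F.ConnectedComponent := by
  classical
  set F' := F ⊔ edge u v with hF'
  have hle : F ≤ F' := le_sup_left
  have hadj : F'.Adj u v := by
    rw [hF', sup_adj, edge_adj]; exact Or.inr ⟨Or.inl ⟨rfl, rfl⟩, hne⟩
  haveI : Fintype F.ConnectedComponent := Fintype.ofFinite _
  haveI : Fintype F'.ConnectedComponent := Fintype.ofFinite _
  set φ : F.ConnectedComponent → F'.ConnectedComponent :=
    ConnectedComponent.map (Hom.ofLE hle) with hφdef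
  have hφ : ∀ x : V, φ (F.connectedComponentMk x) = F'.connectedComponentMk x := fun x => rfl
  have key : ∀ c' : F'.ConnectedComponent,
      (Finset.univ.filter fun c => φ c = c').card
        = if c' = F'.connectedComponentMk u then 2 else 1 := by
    refine ConnectedComponent.ind fun x => ?_
    split_ifs with h
    · have hpair : (Finset.univ.filter fun c => φ c = F'.connectedComponentMk x)
          = {F.connectedComponentMk u, F.connectedComponentMk v} := by
        ext c
        refine ConnectedComponent.ind (fun y => ?_) c
        simp only [Finset.mem_filter, Finset.mem_univ, true_and, Finset.mem_insert,
          Finset.mem_singleton, hφ, h]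
        rw [ConnectedComponent.eq, ConnectedComponent.eq, ConnectedComponent.eq]
        exact reachable_sup_edge_iff hne y
      rw [hpair, Finset.card_insert_of_notMem, Finset.card_singleton]
      rw [Finset.mem_singleton]
      intro hc
      exact hr ((ConnectedComponent.eq).mp hc)
    · have hsing : (Finset.univ.filter fun c => φ c = F'.connectedComponentMk x)
          = {F.connectedComponentMk x} := by
        ext c
        refine ConnectedComponent.ind (fun y => ?_) c
        simp only [Finset.mem_filter, Finset.mem_univ, true_and, Finset.mem_singleton, hφ]
        rw [ConnectedComponent.eq, ConnectedComponent.eq]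
        constructor
        · intro hyx
          rcases reachable_sup_edge y x hyx with h' | ⟨h1, h2⟩ | ⟨h1, h2⟩
          · exact h'
          · exact absurd (ConnectedComponent.eq.mpr
              (((h2.mono hle).symm.trans hadj.symm.reachable) : F'.Reachable x u)) h
          · exact absurd (ConnectedComponent.eq.mpr
              (((h2.mono hle).symm) : F'.Reachable x u)) h
        · exact fun h' => h'.mono hle
      rw [hsing, Finset.card_singleton]
  have hcard : Fintype.card F.ConnectedComponent
      = Fintype.card F'.ConnectedComponent + 1 := by
    rw [← Finset.card_univ,
      Finset.card_eq_sum_card_fiberwise (f := φ) (t := Finset.univ) (fun c _ => Finset.mem_univ _)]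
    simp_rw [key]
    have h2 : ∀ c' : F'.ConnectedComponent,
        (if c' = F'.connectedComponentMk u then 2 else 1)
          = (if c' = F'.connectedComponentMk u then 1 else 0) + 1 := by
      intro c'; split_ifs <;> rfl
    simp_rw [h2]
    rw [Finset.sum_add_distrib,
      Finset.sum_ite_eq' Finset.univ (F'.connectedComponentMk u) (fun _ => 1)]
    simp [Finset.card_univ, Nat.add_comm]
  rw [Nat.card_eq_fintype_card, Nat.card_eq_fintype_card, hcard]

lemma card_cc_bot [Fintype V] :
    Nat.card (⊥ : SimpleGraph V).ConnectedComponent = Fintype.card V := by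
  have hbij : Function.Bijective ((⊥ : SimpleGraph V).connectedComponentMk) := by
    constructor
    · intro x y h
      exact reachable_bot.mp (ConnectedComponent.eq.mp h)
    · exact ConnectedComponent.ind fun v => ⟨v, rfl⟩
  rw [← Nat.card_eq_fintype_card, Nat.card_eq_of_bijective _ hbij]

lemma forest_card [Fintype V] {F : SimpleGraph V} (hF : F.IsAcyclic) :
    F.edgeSet.ncard + Nat.card F.ConnectedComponent = Fintype.card V := by
  classical
  generalize hn : F.edgeSet.ncard = n
  induction n generalizing F with
  | zero =>
    have hbot : F = ⊥ := by
      rw [← edgeSet_eq_empty]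
      exact (Set.ncard_eq_zero (Set.toFinite _)).mp hn
    subst hbot
    rw [zero_add]
    exact card_cc_bot
  | succ n ih =>
    have hne : F.edgeSet.Nonempty := by
      rw [Set.nonempty_iff_ne_empty]
      intro h0
      rw [h0] at hn
      simp at hn
    obtain ⟨e, he⟩ := hne
    induction e using Sym2.ind with
    | _ a b =>
    have hadj : F.Adj a b := he
    set F₀ := F.deleteEdges {s(a, b)} with hF₀
    have hnr : ¬ F₀.Reachable a b :=
      (isBridge_iff.mp (isAcyclic_iff_forall_adj_isBridge.mp hF hadj))
    have hFeq : F = F₀ ⊔ edge a b := by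
      ext x y
      simp only [sup_adj, hF₀, deleteEdges_adj, Set.mem_singleton_iff, edge_adj]
      constructor
      · intro hxy
        by_cases hxy' : s(x, y) = s(a, b)
        · rw [Sym2.eq_iff] at hxy'
          exact Or.inr ⟨hxy', hxy.ne⟩
        · exact Or.inl ⟨hxy, hxy'⟩
      · rintro (⟨h1, _⟩ | ⟨⟨rfl, rfl⟩ | ⟨rfl, rfl⟩, _⟩)
        · exact h1
        · exact hadj
        · exact hadj.symm
    have hes : F₀.edgeSet = F.edgeSet \ {s(a, b)} := by
      rw [hF₀, edgeSet_deleteEdges]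
    have hnc : F₀.edgeSet.ncard = n := by
      rw [hes, Set.ncard_diff_singleton_of_mem he, hn]
      omega
    have hF₀ac : F₀.IsAcyclic := acyclic_mono (deleteEdges_le _) hF
    have hcc := card_cc_sup_edge hadj.ne hnr
    rw [← hFeq] at hcc
    have hih := ih hF₀ac hnc
    omega

lemma reachable_of_le_adj {X F : SimpleGraph V} (h : ∀ a b, X.Adj a b → F.Reachable a b)
    {u v : V} (hr : X.Reachable u v) : F.Reachable u v := by
  obtain ⟨p⟩ := hr
  induction p with
  | nil => exact Reachable.refl _
  | cons ha p ih => exact (h _ _ ha).trans ih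

lemma edge_le_of_adj {X : SimpleGraph V} {a b : V} (h : X.Adj a b) : edge a b ≤ X := by
  intro x y hxy
  rw [edge_adj] at hxy
  rcases hxy with ⟨⟨rfl, rfl⟩ | ⟨rfl, rfl⟩, _⟩
  · exact h
  · exact h.symm

lemma forest_extend [Fintype V] {X F : SimpleGraph V} (hFX : F ≤ X) (hF : F.IsAcyclic) :
    ∃ F' : SimpleGraph V, F ≤ F' ∧ F' ≤ X ∧ F'.IsAcyclic ∧
      (∀ u v : V, F'.Reachable u v ↔ X.Reachable u v) := by
  classical
  generalize hk : Nat.card F.ConnectedComponent = k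
  induction k using Nat.strong_induction_on generalizing F with
  | _ k ih =>
  by_cases h : ∀ a b, X.Adj a b → F.Reachable a b
  · exact ⟨F, le_refl _, hFX, hF,
      fun u v => ⟨fun hr => hr.mono hFX, fun hr => reachable_of_le_adj h hr⟩⟩
  · push_neg at h
    obtain ⟨a, b, hab, hnr⟩ := h
    have hcc := card_cc_sup_edge hab.ne hnr
    obtain ⟨F', h1, h2, h3, h4⟩ := ih (Nat.card (F ⊔ edge a b).ConnectedComponent)
      (by omega) (sup_le hFX (edge_le_of_adj hab))
      (isAcyclic_sup_edge hab.ne hnr hF) rfl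
    exact ⟨F', le_trans le_sup_left h1, h2, h3, h4⟩

lemma card_cc_eq_of_reachable {F X : SimpleGraph V} (h : F ≤ X)
    (hr : ∀ u v, F.Reachable u v ↔ X.Reachable u v) :
    Nat.card F.ConnectedComponent = Nat.card X.ConnectedComponent := by
  apply Nat.card_eq_of_bijective (ConnectedComponent.map (Hom.ofLE h))
  constructor
  · intro c d
    induction c using ConnectedComponent.ind with | _ x =>
    induction d using ConnectedComponent.ind with | _ y =>
    intro hcd
    have : X.Reachable x y := ConnectedComponent.eq.mp hcd
    exact ConnectedComponent.eq.mpr ((hr x y).mpr this)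
  · exact ConnectedComponent.ind fun v => ⟨F.connectedComponentMk v, rfl⟩

lemma wsum_eq [Fintype V] (w : Sym2 V → ℝ) (F : SimpleGraph V) :
    ∑ᶠ e ∈ F.edgeSet, w e = ∑ e ∈ F.edgeSet.toFinite.toFinset, w e := by
  rw [← finsum_mem_coe_finset, Set.Finite.coe_toFinset]

lemma mem_spanning_forest {F FH : SimpleGraph V} (hle : FH ≤ F) (hF : F.IsAcyclic)
    {a b : V} (hadj : F.Adj a b) (hreach : FH.Reachable a b) : s(a, b) ∈ FH.edgeSet := by
  classical
  by_contra he
  obtain ⟨p0⟩ := hreach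
  set p := p0.toPath with hp
  have hsub : ∀ e ∈ (p : FH.Walk a b).edges, e ∈ F.edgeSet :=
    fun e hme => edgeSet_mono hle (Walk.edges_subset_edgeSet _ hme)
  set q : F.Walk a b := (p : FH.Walk a b).transfer F hsub with hq
  have hqpath : q.IsPath := p.2.transfer hsub
  have hne : ¬ s(b, a) ∈ q.edges := by
    rw [hq, Walk.edges_transfer]
    intro hmem
    rw [Sym2.eq_swap] at hmem
    exact he (Walk.edges_subset_edgeSet _ hmem)
  exact hF _ (Path.cons_isCycle ⟨q, hqpath⟩ hadj.symm hne)


lemma msf_spec {V : Type*} [Fintype V] (X : SimpleGraph V) (w : Sym2 V → ℝ) :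
    (∃ F : SimpleGraph V, F ≤ X ∧ F.IsAcyclic ∧
      (∀ u v : V, F.Reachable u v ↔ X.Reachable u v) ∧
      msf X w = ∑ᶠ e ∈ F.edgeSet, w e) ∧
    (∀ F : SimpleGraph V, F ≤ X → F.IsAcyclic →
      (∀ u v : V, F.Reachable u v ↔ X.Reachable u v) →
      msf X w ≤ ∑ᶠ e ∈ F.edgeSet, w e) := by
  classical
  set S : Set ℝ := {c : ℝ | ∃ F : SimpleGraph V, F ≤ X ∧ F.IsAcyclic ∧
    (∀ u v : V, F.Reachable u v ↔ X.Reachable u v) ∧ c = ∑ᶠ e ∈ F.edgeSet, w e} with hS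
  have hmsf : msf X w = sInf S := rfl
  have hfin : S.Finite := by
    apply Set.Finite.subset (Set.finite_range fun F : SimpleGraph V => ∑ᶠ e ∈ F.edgeSet, w e)
    rintro c ⟨F, _, _, _, rfl⟩
    exact ⟨F, rfl⟩
  have hne : S.Nonempty := by
    obtain ⟨F, _, h2, h3, h4⟩ := forest_extend (bot_le : ⊥ ≤ X) isAcyclic_bot
    exact ⟨_, F, h2, h3, h4, rfl⟩
  have hmem : sInf S ∈ S := hne.csInf_mem hfin
  constructor
  · obtain ⟨F, h1, h2, h3, h4⟩ := hmem
    exact ⟨F, h1, h2, h3, hmsf ▸ h4⟩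
  · intro F h1 h2 h3
    rw [hmsf]
    exact csInf_le hfin.bddBelow ⟨F, h1, h2, h3, rfl⟩

end Helpers

/-- Induction step of the threshold characterization of the MST cost: with distinct
edge weights `w₁ < … < w_m`, `H := G_{<w_j}` and `Gnext := G_{<w_{j+1}}` (which is `G`
itself when `j = m`, corresponding to `w_{m+1} = +∞`),
`MSF(Gnext) = MSF(H) + (κ_j − κ_{j+1})·w_j` where `κ_j = #cc(H)` and
`κ_{j+1} = #cc(Gnext)`. -/
theorem stmt_11 {V : Type*} [Fintype V] (G : SimpleGraph V)
    (w : Sym2 V → ℝ) (m : ℕ) (ws : Fin m → ℝ) (hmono : StrictMono ws)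
    (hrange : w '' G.edgeSet = Set.range ws)
    (j : Fin m) (Gnext : SimpleGraph V)
    (hGnext : Gnext = if h : (j : ℕ) + 1 < m then threshold G w (ws ⟨(j : ℕ) + 1, h⟩) else G) :
    msf Gnext w =
      msf (threshold G w (ws j)) w +
        ((Nat.card (threshold G w (ws j)).ConnectedComponent : ℝ) -
          (Nat.card Gnext.ConnectedComponent : ℝ)) * ws j := by
  classical
  open SimpleGraph Finset in
  set H := threshold G w (ws j) with hH
  -- every edge weight of G is some ws i
  have hwval : ∀ a b : V, G.Adj a b → ∃ i : Fin m, ws i = w s(a, b) := by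
    intro a b hab
    have : w s(a, b) ∈ Set.range ws := by
      rw [← hrange]
      exact ⟨s(a, b), hab, rfl⟩
    obtain ⟨i, hi⟩ := this
    exact ⟨i, hi⟩
  have hXG : Gnext ≤ G := by
    rw [hGnext]
    split_ifs with hc
    · exact fun a b hab => hab.1
    · exact le_refl _
  have hadjX : ∀ a b : V, Gnext.Adj a b → G.Adj a b ∧ w s(a, b) ≤ ws j := by
    intro a b hab
    have hGab : G.Adj a b := hXG hab
    obtain ⟨i, hi⟩ := hwval a b hGab
    refine ⟨hGab, ?_⟩
    rw [hGnext] at hab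
    by_cases hc : (j : ℕ) + 1 < m
    · rw [dif_pos hc] at hab
      have hlt : w s(a, b) < ws ⟨(j : ℕ) + 1, hc⟩ := hab.2
      rw [← hi] at hlt ⊢
      have h3 : (i : ℕ) < (j : ℕ) + 1 := hmono.lt_iff_lt.mp hlt
      exact hmono.monotone (Fin.le_def.mpr (by omega))
    · rw [← hi]
      have h1 := i.isLt
      have h2 := j.isLt
      exact hmono.monotone (Fin.le_def.mpr (by omega))
  have hHX : H ≤ Gnext := by
    intro a b hab
    obtain ⟨hGab, hwab⟩ := (hab : G.Adj a b ∧ w s(a, b) < ws j)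
    rw [hGnext]
    split_ifs with hc
    · exact ⟨hGab, hwab.trans (hmono (show j < ⟨(j : ℕ) + 1, hc⟩ from
        Fin.lt_def.mpr (Nat.lt_succ_self _)))⟩
    · exact hGab
  -- abbreviations
  set n := Fintype.card V with hn
  set κH := Nat.card H.ConnectedComponent with hκH
  set κX := Nat.card Gnext.ConnectedComponent with hκX
  -- UPPER BOUND
  have hupper : msf Gnext w ≤ msf H w + ((κH : ℝ) - (κX : ℝ)) * ws j := by
    obtain ⟨FH, hFH1, hFH2, hFH3, hFH4⟩ := (msf_spec H w).1
    obtain ⟨F, hF1, hF2, hF3, hF4⟩ := forest_extend (hFH1.trans hHX) hFH2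
    have hle : msf Gnext w ≤ ∑ᶠ e ∈ F.edgeSet, w e := (msf_spec Gnext w).2 F hF2 hF3 hF4
    set tF := F.edgeSet.toFinite.toFinset with htF
    set tFH := FH.edgeSet.toFinite.toFinset with htFH
    have hsub : tFH ⊆ tF := by
      rw [htFH, htF, Set.Finite.toFinset_subset, Set.Finite.coe_toFinset]
      exact edgeSet_mono hF1
    have hwD : ∀ e ∈ tF \ tFH, w e = ws j := by
      intro e he
      rw [Finset.mem_sdiff, Set.Finite.mem_toFinset, Set.Finite.mem_toFinset] at he
      obtain ⟨heF, heFH⟩ := he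
      induction e using Sym2.ind with
      | _ a b =>
      have hFab : F.Adj a b := heF
      have hXab : Gnext.Adj a b := hF2 hFab
      obtain ⟨hGab, hwle⟩ := hadjX a b hXab
      rcases lt_or_eq_of_le hwle with hlt | heq
      · exfalso
        have hHab : H.Adj a b := ⟨hGab, hlt⟩
        have hreach : FH.Reachable a b := (hFH3 a b).mpr hHab.reachable
        exact heFH (mem_spanning_forest hF1 hF3 hFab hreach)
      · exact heq
    have hsum : ∑ᶠ e ∈ F.edgeSet, w e
        = ∑ᶠ e ∈ FH.edgeSet, w e + ((tF \ tFH).card : ℝ) * ws j := by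
      rw [wsum_eq, wsum_eq, ← htF, ← htFH, ← Finset.sum_sdiff hsub]
      have : ∑ e ∈ tF \ tFH, w e = ((tF \ tFH).card : ℝ) * ws j := by
        rw [Finset.sum_congr rfl hwD, Finset.sum_const, nsmul_eq_mul]
      rw [this]
      ring
    -- cardinalities
    have hcFH : tFH.card + κH = n := by
      have h1 := forest_card (V := V) hFH2
      rw [card_cc_eq_of_reachable hFH1 hFH3] at h1
      rwa [htFH, ← Set.ncard_eq_toFinset_card _ (Set.toFinite _)]
    have hcF : tF.card + κX = n := by
      have h1 := forest_card (V := V) hF3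
      rw [card_cc_eq_of_reachable hF2 hF4] at h1
      rwa [htF, ← Set.ncard_eq_toFinset_card _ (Set.toFinite _)]
    have hcD : (tF \ tFH).card + tFH.card = tF.card := Finset.card_sdiff_add_card_eq_card hsub
    have hDcast : ((tF \ tFH).card : ℝ) = (κH : ℝ) - (κX : ℝ) := by
      have : (tF \ tFH).card + κX = κH := by omega
      push_cast [← this]
      ring
    rw [hsum, hDcast] at hle
    rw [← hFH4] at hle
    exact hle
  -- LOWER BOUND
  have hlower : msf H w + ((κH : ℝ) - (κX : ℝ)) * ws j ≤ msf Gnext w := by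
    obtain ⟨F, hF1, hF2, hF3, hF4⟩ := (msf_spec Gnext w).1
    set F₀ := threshold F w (ws j) with hF₀
    have hF₀F : F₀ ≤ F := fun a b hab => hab.1
    have hF₀H : F₀ ≤ H := by
      intro a b hab
      obtain ⟨hFab, hwab⟩ := (hab : F.Adj a b ∧ w s(a, b) < ws j)
      exact ⟨hXG (hF1 hFab), hwab⟩
    have hF₀ac : F₀.IsAcyclic := acyclic_mono hF₀F hF2
    obtain ⟨F₁, hF₁1, hF₁2, hF₁3, hF₁4⟩ := forest_extend hF₀H hF₀ac
    have hmsfH : msf H w ≤ ∑ᶠ e ∈ F₁.edgeSet, w e := (msf_spec H w).2 F₁ hF₁2 hF₁3 hF₁4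
    set tF := F.edgeSet.toFinite.toFinset with htF
    set tF₀ := F₀.edgeSet.toFinite.toFinset with htF₀
    set tF₁ := F₁.edgeSet.toFinite.toFinset with htF₁
    have hsub : tF₀ ⊆ tF := by
      rw [htF₀, htF, Set.Finite.toFinset_subset, Set.Finite.coe_toFinset]
      exact edgeSet_mono hF₀F
    have hsub₁ : tF₀ ⊆ tF₁ := by
      rw [htF₀, htF₁, Set.Finite.toFinset_subset, Set.Finite.coe_toFinset]
      exact edgeSet_mono hF₁1
    -- edges of F outside F₀ have weight exactly ws j
    have hwD : ∀ e ∈ tF \ tF₀, w e = ws j := by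
      intro e he
      rw [Finset.mem_sdiff, Set.Finite.mem_toFinset, Set.Finite.mem_toFinset] at he
      obtain ⟨heF, heF₀⟩ := he
      induction e using Sym2.ind with
      | _ a b =>
      have hFab : F.Adj a b := heF
      obtain ⟨hGab, hwle⟩ := hadjX a b (hF1 hFab)
      rcases lt_or_eq_of_le hwle with hlt | heq
      · exact absurd (⟨hFab, hlt⟩ : F₀.Adj a b) heF₀
      · exact heq
    -- edges of F₁ outside F₀ have weight < ws j
    have hwD₁ : ∀ e ∈ tF₁ \ tF₀, w e ≤ ws j := by
      intro e he
      rw [Finset.mem_sdiff, Set.Finite.mem_toFinset] at he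
      obtain ⟨heF₁, _⟩ := he
      induction e using Sym2.ind with
      | _ a b =>
      exact le_of_lt (hF₁2 (heF₁ : F₁.Adj a b)).2
    have hsum : ∑ᶠ e ∈ F.edgeSet, w e
        = ∑ᶠ e ∈ F₀.edgeSet, w e + ((tF \ tF₀).card : ℝ) * ws j := by
      rw [wsum_eq, wsum_eq, ← htF, ← htF₀, ← Finset.sum_sdiff hsub]
      have : ∑ e ∈ tF \ tF₀, w e = ((tF \ tF₀).card : ℝ) * ws j := by
        rw [Finset.sum_congr rfl hwD, Finset.sum_const, nsmul_eq_mul]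
      rw [this]
      ring
    have hsum₁ : ∑ᶠ e ∈ F₁.edgeSet, w e
        ≤ ∑ᶠ e ∈ F₀.edgeSet, w e + ((tF₁ \ tF₀).card : ℝ) * ws j := by
      rw [wsum_eq, wsum_eq, ← htF₁, ← htF₀, ← Finset.sum_sdiff hsub₁]
      have h1 : ∑ e ∈ tF₁ \ tF₀, w e ≤ ((tF₁ \ tF₀).card : ℝ) * ws j := by
        have := Finset.sum_le_card_nsmul (tF₁ \ tF₀) w (ws j) hwD₁
        rwa [nsmul_eq_mul] at this
      linarith
    -- cardinalities
    set κ₀ := Nat.card F₀.ConnectedComponent with hκ₀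
    have hcF : tF.card + κX = n := by
      have h1 := forest_card (V := V) hF2
      rw [card_cc_eq_of_reachable hF1 hF3] at h1
      rwa [htF, ← Set.ncard_eq_toFinset_card _ (Set.toFinite _)]
    have hcF₀ : tF₀.card + κ₀ = n := by
      have h1 := forest_card (V := V) hF₀ac
      rwa [htF₀, ← Set.ncard_eq_toFinset_card _ (Set.toFinite _)]
    have hcF₁ : tF₁.card + κH = n := by
      have h1 := forest_card (V := V) hF₁3
      rw [card_cc_eq_of_reachable hF₁2 hF₁4] at h1
      rwa [htF₁, ← Set.ncard_eq_toFinset_card _ (Set.toFinite _)]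
    have hcD : (tF \ tF₀).card + tF₀.card = tF.card := Finset.card_sdiff_add_card_eq_card hsub
    have hcD₁ : (tF₁ \ tF₀).card + tF₀.card = tF₁.card := Finset.card_sdiff_add_card_eq_card hsub₁
    have hDcast : ((tF \ tF₀).card : ℝ) = (κ₀ : ℝ) - (κX : ℝ) := by
      have : (tF \ tF₀).card + κX = κ₀ := by omega
      push_cast [← this]
      ring
    have hD₁cast : ((tF₁ \ tF₀).card : ℝ) = (κ₀ : ℝ) - (κH : ℝ) := by
      have : (tF₁ \ tF₀).card + κH = κ₀ := by omega
      push_cast [← this]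
      ring
    rw [hDcast] at hsum
    rw [hD₁cast] at hsum₁
    rw [hF4, hsum]
    linarith
  linarith
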